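/- (Embedding criterion) Let p ≠ q be positive integers and m, n positive integers. The grid graph □_m embeds into the (p,q)-leaper graph L_n if and only if there exist two paths α = A_1–A_2–⋯–A_m and β = B_1–B_2–⋯–B_m in the infinite leaper graph on ℤ² such that (i) the set of differences A_i − A_j (over all i,j) intersects the set of differences B_i − B_j only in the zero vector, and (ii) the bounding boxes of {A_i} and {B_j}, of sizes a_X × a_Y and b_X × b_Y respectively, satisfy a_X + b_X ≤ n + 1 and a_Y + b_Y ≤ n + 1. -/

import Mathlib

def gridAdj (a b : ℤ × ℤ) : Prop := |a.1 - b.1| + |a.2 - b.2| = 1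

def leapAdj (p q : ℤ) (a b : ℤ × ℤ) : Prop :=
  (|a.1 - b.1| = p ∧ |a.2 - b.2| = q) ∨ (|a.1 - b.1| = q ∧ |a.2 - b.2| = p)

def box (n : ℕ) : Set (ℤ × ℤ) := {v | 1 ≤ v.1 ∧ v.1 ≤ (n : ℤ) ∧ 1 ≤ v.2 ∧ v.2 ≤ (n : ℤ)}

/-- Horizontal size of the bounding box of a finite (nonempty) subset of `ℤ²`. -/
def widthX (S : Finset (ℤ × ℤ)) : ℤ :=
  (S.image Prod.fst).max.unbotD 0 - (S.image Prod.fst).min.untopD 0 + 1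

/-- Vertical size of the bounding box of a finite (nonempty) subset of `ℤ²`. -/
def widthY (S : Finset (ℤ × ℤ)) : ℤ :=
  (S.image Prod.snd).max.unbotD 0 - (S.image Prod.snd).min.untopD 0 + 1

/-- A sequence `A 0, …, A (m-1)` is a path in the infinite `(p,q)`-leaper graph on `ℤ²`:
distinct vertices, consecutive ones joined by leaper moves. -/
def leaperPath (p q : ℤ) (m : ℕ) (A : ℕ → ℤ × ℤ) : Prop :=
  Set.InjOn A (Set.Iio m) ∧ ∀ i, i + 1 < m → leapAdj p q (A i) (A (i + 1))

/-!
In a leaper graph every 4-cycle is a parallelogram: four moves that sum to zero, no two consecutive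
ones cancelling, form two pairs of opposite moves. So an embedding `f` of `□_m` maps every unit
square to a parallelogram, which forces `f (i, j) = f (i, 1) + f (1, j) - f (1, 1)`: the embedding
is the sum of two leaper paths, its first row `α` and its first column `β`. Injectivity of `f` then
says exactly that the difference sets of `α` and `β` meet only in `0`, and since the bounding box
of `{A_i + B_j}` has size `(a_X + b_X - 1) × (a_Y + b_Y - 1)`, a translate of `f` fits into `[n]²`
exactly when the width conditions hold. Conversely, `(i, j) ↦ A_i + B_j - c` is an embedding.
-/

/-- `leapAdj p q a b` unfolds to `IsLeapMove p q (a.1 - b.1) (a.2 - b.2)`. -/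
def IsLeapMove (p q x y : ℤ) : Prop := (|x| = p ∧ |y| = q) ∨ (|x| = q ∧ |y| = p)

namespace IsLeapMove

variable {p q x y : ℤ}

lemma nonneg (h : IsLeapMove p q x y) : 0 ≤ p ∧ 0 ≤ q := by
  rcases h with ⟨rfl, rfl⟩ | ⟨rfl, rfl⟩ <;> exact ⟨abs_nonneg _, abs_nonneg _⟩

lemma neg_left (h : IsLeapMove p q x y) : IsLeapMove p q (-x) y := by
  rwa [IsLeapMove, abs_neg]

lemma neg_right (h : IsLeapMove p q x y) : IsLeapMove p q x (-y) := by
  rwa [IsLeapMove, abs_neg]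

lemma swap (h : IsLeapMove p q x y) : IsLeapMove p q y x := by
  unfold IsLeapMove at *
  tauto

theorem add_eq_zero_of_add_add_add_eq_zero {x₁ y₁ x₂ y₂ x₃ y₃ x₄ y₄ : ℤ}
    (h₁ : IsLeapMove p q x₁ y₁) (h₂ : IsLeapMove p q x₂ y₂) (h₃ : IsLeapMove p q x₃ y₃)
    (h₄ : IsLeapMove p q x₄ y₄) (hx : x₁ + x₂ + x₃ + x₄ = 0) (hy : y₁ + y₂ + y₃ + y₄ = 0)
    (h₁₂ : x₁ + x₂ ≠ 0 ∨ y₁ + y₂ ≠ 0) (h₂₃ : x₂ + x₃ ≠ 0 ∨ y₂ + y₃ ≠ 0) :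
    x₁ + x₃ = 0 ∧ y₁ + y₃ = 0 := by
  obtain ⟨hp, hq⟩ := h₁.nonneg
  -- The symmetries of the set of moves reduce to the first move being `(p, q)`.
  wlog hx₁ : 0 ≤ x₁ generalizing x₁ x₂ x₃ x₄ with H
  · have := H h₁.neg_left h₂.neg_left h₃.neg_left h₄.neg_left (by omega) (by omega) (by omega)
      (by omega)
    omega
  wlog hy₁ : 0 ≤ y₁ generalizing y₁ y₂ y₃ y₄ with H
  · have := H (h₁ := h₁.neg_right) (h₂ := h₂.neg_right) (h₃ := h₃.neg_right)
      (h₄ := h₄.neg_right) (hy := by omega) (h₁₂ := by omega) (h₂₃ := by omega) (hy₁ := by omega)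
    omega
  wlog h₁' : x₁ = p ∧ y₁ = q generalizing x₁ y₁ x₂ y₂ x₃ y₃ x₄ y₄ with H
  · have := H (h₁ := h₁.swap) (h₂ := h₂.swap) (h₃ := h₃.swap) (h₄ := h₄.swap)
      (hx := hy) (hy := hx) (h₁₂ := by omega) (h₂₃ := by omega) (hx₁ := hy₁) (hy₁ := hx₁)
      (h₁' := by rw [IsLeapMove, abs_of_nonneg hx₁, abs_of_nonneg hy₁] at h₁; omega)
    omega
  obtain ⟨rfl, rfl⟩ := h₁'
  simp only [IsLeapMove, abs_eq hp, abs_eq hq] at h₂ h₃ h₄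
  rcases h₂ with ⟨hx₂, hy₂⟩ | ⟨hx₂, hy₂⟩ <;> rcases h₃ with ⟨hx₃, hy₃⟩ | ⟨hx₃, hy₃⟩ <;>
    rcases h₄ with ⟨hx₄, hy₄⟩ | ⟨hx₄, hy₄⟩ <;> omega

end IsLeapMove

section LeapAdj

variable {p q : ℤ} {a b c w x y z : ℤ × ℤ}

lemma leapAdj_symm (h : leapAdj p q a b) : leapAdj p q b a := by
  rwa [leapAdj, abs_sub_comm b.1, abs_sub_comm b.2]

lemma leapAdj_add_right : leapAdj p q (a + c) (b + c) ↔ leapAdj p q a b := by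
  simp only [leapAdj, Prod.fst_add, Prod.snd_add, add_sub_add_right_eq_sub]

lemma leapAdj_add_left : leapAdj p q (c + a) (c + b) ↔ leapAdj p q a b := by
  simp only [leapAdj, Prod.fst_add, Prod.snd_add, add_sub_add_left_eq_sub]

theorem add_eq_add_of_leapAdj_cycle (h₁ : leapAdj p q w x) (h₂ : leapAdj p q x y)
    (h₃ : leapAdj p q y z) (h₄ : leapAdj p q z w) (hwy : w ≠ y) (hxz : x ≠ z) :
    w + y = x + z := by
  have := IsLeapMove.add_eq_zero_of_add_add_add_eq_zero h₁ h₂ h₃ h₄ (by ring) (by ring)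
    (by contrapose! hwy; exact Prod.ext (by omega) (by omega))
    (by contrapose! hxz; exact Prod.ext (by omega) (by omega))
  exact Prod.ext (by simp only [Prod.fst_add]; omega) (by simp only [Prod.snd_add]; omega)

end LeapAdj

theorem eq_add_sub_of_mixed_sub_eq_zero {G : Type*} [AddCommGroup G] {m : ℕ} (g : ℕ → ℕ → G)
    (h : ∀ i j, i + 1 < m → j + 1 < m → g (i + 1) (j + 1) - g i (j + 1) = g (i + 1) j - g i j)
    {i j : ℕ} (hi : i < m) (hj : j < m) : g i j = g i 0 + g 0 j - g 0 0 := by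
  have row : ∀ i j, i + 1 < m → j < m → g (i + 1) j - g i j = g (i + 1) 0 - g i 0 := by
    intro i j hi hj
    induction j with
    | zero => rfl
    | succ j ih => rw [h i j hi hj, ih (by omega)]
  induction i with
  | zero => exact (add_sub_cancel_left _ _).symm
  | succ i ih =>
    calc g (i + 1) j = (g (i + 1) j - g i j) + g i j := (sub_add_cancel _ _).symm
      _ = (g (i + 1) 0 - g i 0) + (g i 0 + g 0 j - g 0 0) := by rw [row i j hi hj, ih (by omega)]
      _ = g (i + 1) 0 + g 0 j - g 0 0 := by abel

lemma exists_add_sub_mem_Icc_iff {S T : Finset ℤ} (hS : S.Nonempty) (hT : T.Nonempty) {n : ℤ} :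
    (∃ c, ∀ s ∈ S, ∀ t ∈ T, s + t - c ∈ Set.Icc 1 n) ↔
      S.max' hS - S.min' hS + (T.max' hT - T.min' hT) < n := by
  constructor
  · rintro ⟨c, hc⟩
    have hmax := hc _ (S.max'_mem hS) _ (T.max'_mem hT)
    have hmin := hc _ (S.min'_mem hS) _ (T.min'_mem hT)
    rw [Set.mem_Icc] at hmax hmin
    linarith
  · intro h
    refine ⟨S.min' hS + T.min' hT - 1, fun s hs t ht => ⟨?_, ?_⟩⟩
    · linarith [S.min'_le s hs, T.min'_le t ht]
    · linarith [S.le_max' s hs, T.le_max' t ht]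

lemma widthX_eq {S : Finset (ℤ × ℤ)} (hS : S.Nonempty) :
    widthX S =
      (S.image Prod.fst).max' (hS.image _) - (S.image Prod.fst).min' (hS.image _) + 1 := by
  rw [widthX, ← Finset.coe_max', ← Finset.coe_min', WithBot.unbotD_coe, WithTop.untopD_coe]

lemma widthY_eq {S : Finset (ℤ × ℤ)} (hS : S.Nonempty) :
    widthY S =
      (S.image Prod.snd).max' (hS.image _) - (S.image Prod.snd).min' (hS.image _) + 1 := by
  rw [widthY, ← Finset.coe_max', ← Finset.coe_min', WithBot.unbotD_coe, WithTop.untopD_coe]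

lemma mem_box_iff {n : ℕ} {v : ℤ × ℤ} :
    v ∈ box n ↔ v.1 ∈ Set.Icc 1 (n : ℤ) ∧ v.2 ∈ Set.Icc 1 (n : ℤ) := by
  rw [Set.mem_Icc, Set.mem_Icc, and_assoc]
  rfl

theorem exists_add_sub_mem_box_iff {S T : Finset (ℤ × ℤ)} (hS : S.Nonempty) (hT : T.Nonempty)
    {n : ℕ} : (∃ c, ∀ s ∈ S, ∀ t ∈ T, s + t - c ∈ box n) ↔
      widthX S + widthX T ≤ n + 1 ∧ widthY S + widthY T ≤ n + 1 := by
  have hX := exists_add_sub_mem_Icc_iff (hS.image Prod.fst) (hT.image Prod.fst) (n := n)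
  have hY := exists_add_sub_mem_Icc_iff (hS.image Prod.snd) (hT.image Prod.snd) (n := n)
  simp only [Finset.forall_mem_image] at hX hY
  rw [widthX_eq hS, widthX_eq hT, widthY_eq hS, widthY_eq hT]
  constructor
  · rintro ⟨c, hc⟩
    have hX' := hX.1 ⟨c.1, fun s hs t ht => (mem_box_iff.1 (hc s hs t ht)).1⟩
    have hY' := hY.1 ⟨c.2, fun s hs t ht => (mem_box_iff.1 (hc s hs t ht)).2⟩
    constructor <;> linarith
  · rintro ⟨hwX, hwY⟩
    obtain ⟨c₁, hc₁⟩ := hX.2 (by linarith)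
    obtain ⟨c₂, hc₂⟩ := hY.2 (by linarith)
    exact ⟨(c₁, c₂), fun s hs t ht => mem_box_iff.2 ⟨hc₁ hs ht, hc₂ hs ht⟩⟩

section GridEmbedding

variable {p q : ℤ} {m n : ℕ}

lemma gridAdj_iff {a b : ℤ × ℤ} :
    gridAdj a b ↔ (b.1 = a.1 + 1 ∧ b.2 = a.2) ∨ (b.1 = a.1 ∧ b.2 = a.2 + 1) ∨
      (a.1 = b.1 + 1 ∧ a.2 = b.2) ∨ (a.1 = b.1 ∧ a.2 = b.2 + 1) := by
  unfold gridAdj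
  rcases abs_cases (a.1 - b.1) with ⟨h₁, _⟩ | ⟨h₁, _⟩ <;>
    rcases abs_cases (a.2 - b.2) with ⟨h₂, _⟩ | ⟨h₂, _⟩ <;> rw [h₁, h₂] <;> omega

/-- `F i j` is the image of the grid point `(i + 1, j + 1)` of `□_m`. -/
structure IsLeaperGridEmbedding (p q : ℤ) (m n : ℕ) (F : ℕ → ℕ → ℤ × ℤ) : Prop where
  mem_box : ∀ i < m, ∀ j < m, F i j ∈ box n
  injOn : ∀ i < m, ∀ j < m, ∀ i' < m, ∀ j' < m, F i j = F i' j' → i = i' ∧ j = j'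
  leapAdj_succ_left : ∀ i j, i + 1 < m → j < m → leapAdj p q (F i j) (F (i + 1) j)
  leapAdj_succ_right : ∀ i j, i < m → j + 1 < m → leapAdj p q (F i j) (F i (j + 1))

theorem exists_gridEmbedding_iff_exists_isLeaperGridEmbedding :
    (∃ f : ℤ × ℤ → ℤ × ℤ, (∀ v ∈ box m, f v ∈ box n) ∧ Set.InjOn f (box m) ∧
        ∀ a ∈ box m, ∀ b ∈ box m, gridAdj a b → leapAdj p q (f a) (f b)) ↔
      ∃ F, IsLeaperGridEmbedding p q m n F := by
  constructor
  · rintro ⟨f, hbox, hinj, hadj⟩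
    have hmem {i j : ℕ} (hi : i < m) (hj : j < m) : ((i : ℤ) + 1, (j : ℤ) + 1) ∈ box m :=
      ⟨by omega, by omega, by omega, by omega⟩
    refine ⟨fun i j => f ((i : ℤ) + 1, (j : ℤ) + 1), fun i hi j hj => hbox _ (hmem hi hj),
      fun i hi j hj i' hi' j' hj' h => ?_, fun i j hi hj => ?_, fun i j hi hj => ?_⟩
    · have := Prod.ext_iff.1 (hinj (hmem hi hj) (hmem hi' hj') h)
      omega
    · exact hadj _ (hmem (by omega) hj) _ (hmem hi hj) (gridAdj_iff.2 (by push_cast; omega))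
    · exact hadj _ (hmem hi (by omega)) _ (hmem hi hj) (gridAdj_iff.2 (by push_cast; omega))
  · rintro ⟨F, hF⟩
    let f : ℤ × ℤ → ℤ × ℤ := fun v => F (v.1 - 1).toNat (v.2 - 1).toNat
    have step : ∀ a ∈ box m, ∀ b ∈ box m,
        (b.1 = a.1 + 1 ∧ b.2 = a.2) ∨ (b.1 = a.1 ∧ b.2 = a.2 + 1) → leapAdj p q (f a) (f b) := by
      rintro a ⟨_, _, _, _⟩ b ⟨_, _, _, _⟩ (⟨h₁, h₂⟩ | ⟨h₁, h₂⟩) <;>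
        change leapAdj p q (F _ _) (F (b.1 - 1).toNat (b.2 - 1).toNat)
      · rw [show (b.1 - 1).toNat = (a.1 - 1).toNat + 1 by omega, h₂]
        exact hF.leapAdj_succ_left _ _ (by omega) (by omega)
      · rw [show (b.2 - 1).toNat = (a.2 - 1).toNat + 1 by omega, h₁]
        exact hF.leapAdj_succ_right _ _ (by omega) (by omega)
    refine ⟨f, fun v ⟨_, _, _, _⟩ => hF.mem_box _ (by omega) _ (by omega),
      fun a ⟨_, _, _, _⟩ b ⟨_, _, _, _⟩ h => ?_, fun a ha b hb h => ?_⟩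
    · have := hF.injOn _ (by omega) _ (by omega) _ (by omega) _ (by omega) h
      exact Prod.ext (by omega) (by omega)
    · rcases gridAdj_iff.1 h with h | h | h | h
      exacts [step a ha b hb (.inl h), step a ha b hb (.inr h),
        leapAdj_symm (step b hb a ha (.inl h)), leapAdj_symm (step b hb a ha (.inr h))]

namespace IsLeaperGridEmbedding

variable {F : ℕ → ℕ → ℤ × ℤ} (hF : IsLeaperGridEmbedding p q m n F)
include hF

theorem eq_add_sub {i j : ℕ} (hi : i < m) (hj : j < m) : F i j = F i 0 + F 0 j - F 0 0 := by
  refine eq_add_sub_of_mixed_sub_eq_zero F (fun i j hi hj => ?_) hi hj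
  rw [sub_eq_sub_iff_add_eq_add, add_comm]
  refine add_eq_add_of_leapAdj_cycle (hF.leapAdj_succ_left i j hi (by omega))
    (hF.leapAdj_succ_right (i + 1) j hi hj) (leapAdj_symm (hF.leapAdj_succ_left i (j + 1) hi hj))
    (leapAdj_symm (hF.leapAdj_succ_right i j (by omega) hj)) (fun h => ?_) (fun h => ?_)
  · have := hF.injOn _ (by omega) _ (by omega) _ hi _ hj h
    omega
  · have := hF.injOn _ hi _ (by omega) _ (by omega) _ hj h
    omega

theorem leaperPath_row (hm : 0 < m) : leaperPath p q m (fun i => F i 0) :=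
  ⟨fun i hi i' hi' h => (hF.injOn i hi 0 hm i' hi' 0 hm h).1,
    fun i hi => hF.leapAdj_succ_left i 0 hi hm⟩

theorem leaperPath_column (hm : 0 < m) : leaperPath p q m (F 0) :=
  ⟨fun j hj j' hj' h => (hF.injOn 0 hm j hj 0 hm j' hj' h).2,
    fun j hj => hF.leapAdj_succ_right 0 j hm hj⟩

theorem sub_eq_zero_of_sub_eq_sub {i j k l : ℕ} (hi : i < m) (hj : j < m) (hk : k < m)
    (hl : l < m) (h : F i 0 - F j 0 = F 0 k - F 0 l) : F i 0 - F j 0 = 0 := by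
  have := hF.injOn i hi l hl j hj k hk <| by
    rw [hF.eq_add_sub hi hl, hF.eq_add_sub hj hk]
    linear_combination h
  rw [this.1, sub_self]

end IsLeaperGridEmbedding

theorem isLeaperGridEmbedding_add_sub {A B : ℕ → ℤ × ℤ} {c : ℤ × ℤ} (hA : leaperPath p q m A)
    (hB : leaperPath p q m B)
    (hAB : ∀ i j k l, i < m → j < m → k < m → l < m → A i - A j = B k - B l → A i - A j = 0)
    (hc : ∀ i < m, ∀ j < m, A i + B j - c ∈ box n) :
    IsLeaperGridEmbedding p q m n (fun i j => A i + B j - c) where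
  mem_box := hc
  injOn i hi j hj i' hi' j' hj' h := by
    have hAi : A i = A i' := sub_eq_zero.1 (hAB i i' j' j hi hi' hj' hj (by linear_combination h))
    refine ⟨hA.1 hi hi' hAi, hB.1 hj hj' ?_⟩
    rwa [hAi, sub_left_inj, add_right_inj] at h
  leapAdj_succ_left i j hi _ := by
    rw [add_sub_assoc, add_sub_assoc]
    exact leapAdj_add_right.2 (hA.2 i hi)
  leapAdj_succ_right i j _ hj := by
    rw [add_sub_right_comm, add_sub_right_comm]
    exact leapAdj_add_left.2 (hB.2 j hj)

end GridEmbedding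

theorem embedding_criterion_general (p q : ℤ) (m n : ℕ) (hm : 0 < m) :
    (∃ f : ℤ × ℤ → ℤ × ℤ,
        (∀ v ∈ box m, f v ∈ box n) ∧
        Set.InjOn f (box m) ∧
        (∀ a ∈ box m, ∀ b ∈ box m, gridAdj a b → leapAdj p q (f a) (f b))) ↔
    (∃ A B : ℕ → ℤ × ℤ,
        leaperPath p q m A ∧ leaperPath p q m B ∧
        (∀ i j k l, i < m → j < m → k < m → l < m →
          A i - A j = B k - B l → A i - A j = 0) ∧
        widthX ((Finset.range m).image A) + widthX ((Finset.range m).image B) ≤ n + 1 ∧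
        widthY ((Finset.range m).image A) + widthY ((Finset.range m).image B) ≤ n + 1) := by
  have hne (A : ℕ → ℤ × ℤ) : ((Finset.range m).image A).Nonempty :=
    (Finset.nonempty_range_iff.2 hm.ne').image A
  rw [exists_gridEmbedding_iff_exists_isLeaperGridEmbedding]
  constructor
  · rintro ⟨F, hF⟩
    refine ⟨_, _, hF.leaperPath_row hm, hF.leaperPath_column hm,
      fun i j k l => hF.sub_eq_zero_of_sub_eq_sub, (exists_add_sub_mem_box_iff (hne _) (hne _)).1
        ⟨F 0 0, ?_⟩⟩
    simp only [Finset.forall_mem_image, Finset.mem_range]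
    intro i hi j hj
    rw [← hF.eq_add_sub hi hj]
    exact hF.mem_box i hi j hj
  · rintro ⟨A, B, hA, hB, hAB, hwidth⟩
    obtain ⟨c, hc⟩ := (exists_add_sub_mem_box_iff (hne A) (hne B)).2 hwidth
    simp only [Finset.forall_mem_image, Finset.mem_range] at hc
    exact ⟨_, isLeaperGridEmbedding_add_sub hA hB hAB fun i hi j hj => hc hi hj⟩

/-- Embedding criterion: `□_m` embeds into the `(p,q)`-leaper graph `L_n` iff there are two
`m`-vertex paths `α, β` in the infinite leaper graph whose difference sets meet only in `0`
and whose bounding boxes, of sizes `a_X × a_Y` and `b_X × b_Y`, satisfy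
`a_X + b_X ≤ n + 1` and `a_Y + b_Y ≤ n + 1`. -/
theorem embedding_criterion (p q : ℤ) (hp : 0 < p) (hq : 0 < q) (hpq : p ≠ q)
    (m n : ℕ) (hm : 0 < m) (hn : 0 < n) :
    (∃ f : ℤ × ℤ → ℤ × ℤ,
        (∀ v ∈ box m, f v ∈ box n) ∧
        Set.InjOn f (box m) ∧
        (∀ a ∈ box m, ∀ b ∈ box m, gridAdj a b → leapAdj p q (f a) (f b))) ↔
    (∃ A B : ℕ → ℤ × ℤ,
        leaperPath p q m A ∧ leaperPath p q m B ∧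
        (∀ i j k l, i < m → j < m → k < m → l < m →
          A i - A j = B k - B l → A i - A j = 0) ∧
        widthX ((Finset.range m).image A) + widthX ((Finset.range m).image B) ≤ n + 1 ∧
        widthY ((Finset.range m).image A) + widthY ((Finset.range m).image B) ≤ n + 1) :=
  embedding_criterion_general p q m n hm
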